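/- arXiv:math/0606595 — 3 statements merged into one kernel-verified Lean document; each statement's English description precedes it below -/
import Mathlib

section
/- Let n ≥ 1, N ≥ 1, let b ∈ ℝ^{n×n} be a symmetric matrix, let β₁,…,β_N ∈ ℝⁿ, and let δ₁ > 0. If the strengthened coercivity condition holds with constant δ₁, i.e. Σ_{i=1}^N yᵢᵀ b yᵢ − (1/2)(Σ_{i=1}^N βᵢᵀ yᵢ)² ≥ δ₁ Σ_{i=1}^N |yᵢ|² for all y₁,…,y_N ∈ ℝⁿ, then the coercivity condition holds with constant δ = δ₁, i.e. yᵀ b y − (1/2) Σ_{i=1}^N (βᵢᵀ y)² ≥ δ₁ |y|² for every y ∈ ℝⁿ. -/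
open Matrix BigOperators

/-- If the strengthened coercivity condition (Condition 4.1 of the paper) holds with
constant `δ₁ > 0`, then the coercivity condition (Condition 3.1) holds with `δ = δ₁`. -/
theorem strengthened_coercivity_implies_coercivity
    (n N : ℕ) (hn : 1 ≤ n) (hN : 1 ≤ N)
    (b : Matrix (Fin n) (Fin n) ℝ) (hb : b.IsSymm)
    (β : Fin N → (Fin n → ℝ)) (δ₁ : ℝ) (hδ₁ : 0 < δ₁)
    (hstrong : ∀ y : Fin N → (Fin n → ℝ),
      ∑ i, (y i) ⬝ᵥ (b *ᵥ (y i)) - (1 / 2) * (∑ i, (β i) ⬝ᵥ (y i)) ^ 2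
        ≥ δ₁ * ∑ i, (y i) ⬝ᵥ (y i)) :
    ∀ y : Fin n → ℝ,
      y ⬝ᵥ (b *ᵥ y) - (1 / 2) * ∑ i, ((β i) ⬝ᵥ y) ^ 2 ≥ δ₁ * (y ⬝ᵥ y) := by
  intro y
  set a : Fin N → ℝ := fun i => (β i) ⬝ᵥ y with ha
  have hgoal : ∑ i, ((β i) ⬝ᵥ y) ^ 2 = ∑ i, a i ^ 2 := rfl
  rw [hgoal]
  by_cases hs : ∑ i, a i ^ 2 = 0
  · -- all a i = 0
    have hz : ∀ i, a i = 0 := by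
      intro i
      have h0 := (Finset.sum_eq_zero_iff_of_nonneg
        (fun i _ => sq_nonneg (a i))).mp hs i (Finset.mem_univ i)
      exact pow_eq_zero_iff (two_ne_zero) |>.mp h0
    have i0 : Fin N := ⟨0, hN⟩
    have h := hstrong (fun i => if i = i0 then y else 0)
    simp only [apply_ite, Matrix.mulVec_zero, dotProduct_zero, zero_dotProduct,
      Finset.sum_ite_eq', Finset.mem_univ, if_true] at h
    have hai0 : (β i0) ⬝ᵥ y = 0 := hz i0
    rw [hs]
    rw [hai0] at h
    linarith
  · have hsnn : 0 ≤ ∑ i, a i ^ 2 := Finset.sum_nonneg fun i _ => sq_nonneg _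
    have hspos : 0 < ∑ i, a i ^ 2 := lt_of_le_of_ne hsnn (Ne.symm hs)
    set r : ℝ := Real.sqrt (∑ i, a i ^ 2) with hrdef
    have hrpos : 0 < r := Real.sqrt_pos.mpr hspos
    have hr2 : r ^ 2 = ∑ i, a i ^ 2 := Real.sq_sqrt hsnn
    have h := hstrong (fun i => (a i / r) • y)
    have h1 : ∀ i : Fin N, ((a i / r) • y) ⬝ᵥ (b *ᵥ ((a i / r) • y))
        = (a i / r) ^ 2 * (y ⬝ᵥ (b *ᵥ y)) := by
      intro i
      simp [Matrix.mulVec_smul, smul_dotProduct, dotProduct_smul, smul_eq_mul]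
      ring
    have h2 : ∀ i : Fin N, (β i) ⬝ᵥ ((a i / r) • y) = (a i / r) * a i := by
      intro i
      simp [dotProduct_smul, smul_eq_mul, ha, mul_comm]
    have h3 : ∀ i : Fin N, ((a i / r) • y) ⬝ᵥ ((a i / r) • y)
        = (a i / r) ^ 2 * (y ⬝ᵥ y) := by
      intro i
      simp [smul_dotProduct, dotProduct_smul, smul_eq_mul]
      ring
    simp only [h1, h2, h3] at h
    have key : ∑ i, (a i / r) ^ 2 = 1 := by
      simp only [div_pow]
      rw [← Finset.sum_div, ← hr2]
      field_simp
    have key2 : ∑ i, (a i / r) * a i = r := by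
      simp only [div_mul_eq_mul_div, ← sq]
      rw [← Finset.sum_div, ← hr2, sq]
      field_simp
    rw [← Finset.sum_mul, ← Finset.sum_mul, key, key2, one_mul, one_mul] at h
    rw [← hr2]
    linarith
end

section
/- Let n ≥ 1, N ≥ 1, let b ∈ ℝ^{n×n} be a symmetric matrix, and let β₁,…,β_N ∈ ℝⁿ. Suppose there exist N₀ ∈ {1,…,N} and δ₂ > 0 such that βᵢ = 0 for all i > N₀ and, for every i ∈ {1,…,N₀} and every y ∈ ℝⁿ, yᵀ b y − (N₀/2)(βᵢᵀ y)² ≥ δ₂ |y|². Then the strengthened coercivity condition holds: Σ_{i=1}^N yᵢᵀ b yᵢ − (1/2)(Σ_{i=1}^N βᵢᵀ yᵢ)² ≥ δ₂ Σ_{i=1}^N |yᵢ|² for all y₁,…,y_N ∈ ℝⁿ. -/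
open Matrix BigOperators

/-- Theorem 4.3 of the paper (pointwise form): if `βᵢ = 0` for `i > N₀` (using
1-based indices `1,…,N`) and `yᵀ b y − (N₀/2)(βᵢᵀ y)² ≥ δ₂ |y|²` for all
`i ≤ N₀` and all `y`, then the strengthened coercivity condition holds with `δ₂`. -/
theorem strengthened_coercivity_of_truncated_condition
    (n N : ℕ) (hn : 1 ≤ n) (hN : 1 ≤ N)
    (b : Matrix (Fin n) (Fin n) ℝ) (hb : b.IsSymm)
    (β : Fin N → (Fin n → ℝ))
    (N₀ : ℕ) (hN₀pos : 1 ≤ N₀) (hN₀le : N₀ ≤ N)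
    (δ₂ : ℝ) (hδ₂ : 0 < δ₂)
    (hzero : ∀ i : Fin N, N₀ ≤ (i : ℕ) → β i = 0)
    (hcoer : ∀ i : Fin N, (i : ℕ) < N₀ → ∀ y : Fin n → ℝ,
      y ⬝ᵥ (b *ᵥ y) - ((N₀ : ℝ) / 2) * ((β i) ⬝ᵥ y) ^ 2 ≥ δ₂ * (y ⬝ᵥ y)) :
    ∀ y : Fin N → (Fin n → ℝ),
      ∑ i, (y i) ⬝ᵥ (b *ᵥ (y i)) - (1 / 2) * (∑ i, (β i) ⬝ᵥ (y i)) ^ 2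
        ≥ δ₂ * ∑ i, (y i) ⬝ᵥ (y i) := by
  intro y
  set s : Finset (Fin N) := Finset.univ.filter (fun i => (i : ℕ) < N₀) with hs
  -- Cauchy–Schwarz type bound
  have hsum_eq : ∑ i, (β i) ⬝ᵥ (y i) = ∑ i ∈ s, (β i) ⬝ᵥ (y i) := by
    symm
    apply Finset.sum_subset (Finset.subset_univ _)
    intro i _ hi
    simp only [hs, Finset.mem_filter, Finset.mem_univ, true_and, not_lt] at hi
    rw [hzero i hi]
    simp [dotProduct]
  have hcard : (s.card : ℝ) ≤ (N₀ : ℝ) := by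
    have : s.card ≤ N₀ := by
      have : s ⊆ Finset.univ.filter (fun i : Fin N => (i : ℕ) < N₀) := le_refl _
      calc s.card ≤ ((Finset.range N₀).card) :=
            Finset.card_le_card_of_injOn (fun i => (i : ℕ))
              (by intro i hi
                  simp only [hs, Finset.mem_filter, Finset.mem_univ, true_and] at hi
                  simpa using hi)
              (by intro a _ b _ h; exact Fin.ext h)
        _ = N₀ := Finset.card_range N₀
    exact_mod_cast this
  have hCS : (∑ i, (β i) ⬝ᵥ (y i)) ^ 2 ≤ (N₀ : ℝ) * ∑ i, ((β i) ⬝ᵥ (y i)) ^ 2 := by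
    rw [hsum_eq]
    calc (∑ i ∈ s, (β i) ⬝ᵥ (y i)) ^ 2
        ≤ (s.card : ℝ) * ∑ i ∈ s, ((β i) ⬝ᵥ (y i)) ^ 2 := by
          exact sq_sum_le_card_mul_sum_sq
      _ ≤ (N₀ : ℝ) * ∑ i, ((β i) ⬝ᵥ (y i)) ^ 2 := by
          apply mul_le_mul hcard
          · apply Finset.sum_le_sum_of_subset_of_nonneg (Finset.subset_univ _)
            intro i _ _; positivity
          · positivity
          · positivity
  have key : ∀ i : Fin N,
      (y i) ⬝ᵥ (b *ᵥ (y i)) - ((N₀ : ℝ) / 2) * ((β i) ⬝ᵥ (y i)) ^ 2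
        ≥ δ₂ * ((y i) ⬝ᵥ (y i)) := by
    intro i
    by_cases hi : (i : ℕ) < N₀
    · exact hcoer i hi (y i)
    · push_neg at hi
      rw [hzero i hi]
      have i0 : Fin N := ⟨0, hN⟩
      have h0 := hcoer ⟨0, hN⟩ hN₀pos (y i)
      have hnn : ((N₀ : ℝ) / 2) * ((β ⟨0, hN⟩) ⬝ᵥ (y i)) ^ 2 ≥ 0 := by positivity
      rw [zero_dotProduct]
      nlinarith [h0, hnn]
  have hsum := Finset.sum_le_sum (fun i (_ : i ∈ Finset.univ) => key i)
  rw [Finset.sum_sub_distrib] at hsum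
  rw [← Finset.mul_sum, ← Finset.mul_sum] at hsum
  nlinarith [hCS, hsum]
end

section
/- Let n ≥ 1, N ≥ 1, let b ∈ ℝ^{n×n} be a symmetric matrix with yᵀ b y ≤ Λ |y|² for all y ∈ ℝⁿ (Λ > 0), let β₁,…,β_N ∈ ℝⁿ, and let β̄₁,…,β̄_N ∈ ℝ with |β̄ᵢ| ≤ K for all i (K ≥ 0). Suppose the strengthened coercivity condition holds with constant δ₁ > 0, i.e. Σ_{i=1}^N yᵢᵀ b yᵢ − (1/2)(Σ_{i=1}^N βᵢᵀ yᵢ)² ≥ δ₁ Σ_{i=1}^N |yᵢ|² for all y₁,…,y_N ∈ ℝⁿ. Then for every δ' with 0 < δ' < δ₁ there exists a constant M > 0, depending only on n, N, Λ, K, δ₁, δ', such that for all y₁,…,y_N ∈ ℝⁿ and all c₁,…,c_N ∈ ℝ: (Σ_{i=1}^N (βᵢᵀ yᵢ + β̄ᵢ cᵢ))² ≤ 2 Σ_{i=1}^N yᵢᵀ b yᵢ + 2M Σ_{i=1}^N cᵢ² − 2δ' Σ_{i=1}^N |yᵢ|². -/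
open Matrix BigOperators

/-- Pointwise form of the key estimate in the proof of the second fundamental
inequality: under the strengthened coercivity condition, the squared first-order
adjoint term is bounded by twice the `b`-weighted Dirichlet form plus a
zero-order term minus a positive multiple of the squared gradients. -/
theorem squared_adjoint_term_estimate
    (n N : ℕ) (hn : 1 ≤ n) (hN : 1 ≤ N)
    (b : Matrix (Fin n) (Fin n) ℝ) (hb : b.IsSymm)
    (Λ : ℝ) (hΛ : 0 < Λ)
    (hbound : ∀ y : Fin n → ℝ, y ⬝ᵥ (b *ᵥ y) ≤ Λ * (y ⬝ᵥ y))
    (β : Fin N → (Fin n → ℝ)) (βbar : Fin N → ℝ)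
    (K : ℝ) (hK : 0 ≤ K) (hβbar : ∀ i, |βbar i| ≤ K)
    (δ₁ : ℝ) (hδ₁ : 0 < δ₁)
    (hstrong : ∀ y : Fin N → (Fin n → ℝ),
      ∑ i, (y i) ⬝ᵥ (b *ᵥ (y i)) - (1 / 2) * (∑ i, (β i) ⬝ᵥ (y i)) ^ 2
        ≥ δ₁ * ∑ i, (y i) ⬝ᵥ (y i)) :
    ∀ δ' : ℝ, 0 < δ' → δ' < δ₁ →
      ∃ M : ℝ, 0 < M ∧
        ∀ (y : Fin N → (Fin n → ℝ)) (c : Fin N → ℝ),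
          (∑ i, ((β i) ⬝ᵥ (y i) + βbar i * c i)) ^ 2
            ≤ 2 * ∑ i, (y i) ⬝ᵥ (b *ᵥ (y i)) + 2 * M * ∑ i, (c i) ^ 2
              - 2 * δ' * ∑ i, (y i) ⬝ᵥ (y i) := by
  intro δ' hδ'pos hδ'lt
  set ε : ℝ := (δ₁ - δ') / Λ with hε_def
  have hε : 0 < ε := div_pos (by linarith) hΛ
  set M : ℝ := (1 + 1 / ε) * N * K ^ 2 / 2 + 1 with hM_def
  have hM : 0 < M := by
    have h1 : 0 < 1 + 1 / ε := by positivity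
    have : 0 ≤ (1 + 1 / ε) * N * K ^ 2 / 2 := by positivity
    rw [hM_def]; linarith
  refine ⟨M, hM, ?_⟩
  intro y c
  set A : ℝ := ∑ i, (β i) ⬝ᵥ (y i) with hA_def
  set B : ℝ := ∑ i, βbar i * c i with hB_def
  set Sb : ℝ := ∑ i, (y i) ⬝ᵥ (b *ᵥ (y i)) with hSb_def
  set Sy : ℝ := ∑ i, (y i) ⬝ᵥ (y i) with hSy_def
  set Sc : ℝ := ∑ i, (c i) ^ 2 with hSc_def
  have hsum : (∑ i, ((β i) ⬝ᵥ (y i) + βbar i * c i)) = A + B := by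
    rw [Finset.sum_add_distrib]
  rw [hsum]
  have hdot : ∀ z : Fin n → ℝ, 0 ≤ z ⬝ᵥ z := by
    intro z
    simp only [dotProduct]
    exact Finset.sum_nonneg fun j _ => mul_self_nonneg _
  have hSy0 : 0 ≤ Sy := Finset.sum_nonneg fun i _ => hdot (y i)
  have hSc0 : 0 ≤ Sc := Finset.sum_nonneg fun i _ => sq_nonneg _
  have hA2 : A ^ 2 ≤ 2 * Sb - 2 * δ₁ * Sy := by
    have := hstrong y
    rw [← hA_def, ← hSb_def, ← hSy_def] at this
    linarith
  have hSbΛ : Sb ≤ Λ * Sy := by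
    rw [hSb_def, hSy_def, Finset.mul_sum]
    exact Finset.sum_le_sum fun i _ => hbound (y i)
  have hALam : A ^ 2 ≤ 2 * Λ * Sy := by nlinarith [mul_nonneg hδ₁.le hSy0]
  have h2 : ε * A ^ 2 ≤ 2 * (δ₁ - δ') * Sy := by
    have := mul_le_mul_of_nonneg_left hALam hε.le
    have heq : ε * (2 * Λ * Sy) = 2 * (δ₁ - δ') * Sy := by
      rw [hε_def]; field_simp
    linarith
  have hB2 : B ^ 2 ≤ (N : ℝ) * K ^ 2 * Sc := by
    have hcs := Finset.sum_mul_sq_le_sq_mul_sq Finset.univ (fun i => βbar i) (fun i => c i)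
    have hβ2 : (∑ i : Fin N, (βbar i) ^ 2) ≤ (N : ℝ) * K ^ 2 := by
      have : ∀ i : Fin N, (βbar i) ^ 2 ≤ K ^ 2 := by
        intro i
        have := hβbar i
        nlinarith [abs_nonneg (βbar i), sq_abs (βbar i)]
      calc (∑ i : Fin N, (βbar i) ^ 2) ≤ ∑ _i : Fin N, K ^ 2 :=
            Finset.sum_le_sum fun i _ => this i
        _ = (N : ℝ) * K ^ 2 := by simp [Finset.sum_const, mul_comm]
    calc B ^ 2 ≤ (∑ i : Fin N, (βbar i) ^ 2) * Sc := hcs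
      _ ≤ (N : ℝ) * K ^ 2 * Sc := mul_le_mul_of_nonneg_right hβ2 hSc0
  have hAB : 2 * A * B ≤ ε * A ^ 2 + (1 / ε) * B ^ 2 := by
    have h := sq_nonneg (ε * A - B)
    have heq : (ε * A ^ 2 + (1 / ε) * B ^ 2 - 2 * A * B) * ε = (ε * A - B) ^ 2 := by
      field_simp; ring
    have h0 : 0 ≤ (ε * A ^ 2 + (1 / ε) * B ^ 2 - 2 * A * B) * ε := heq ▸ h
    have := (mul_nonneg_iff_of_pos_right hε).mp h0
    linarith
  have h3 : (1 + 1 / ε) * B ^ 2 ≤ 2 * M * Sc - 2 * Sc := by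
    have hpos : (0:ℝ) ≤ 1 + 1 / ε := by positivity
    have := mul_le_mul_of_nonneg_left hB2 hpos
    have heq : (1 + 1 / ε) * ((N : ℝ) * K ^ 2 * Sc) = 2 * M * Sc - 2 * Sc := by
      rw [hM_def]; ring
    linarith
  have hexp : (A + B) ^ 2 = A ^ 2 + 2 * A * B + B ^ 2 := by ring
  clear_value ε M A B Sb Sy Sc
  linarith [hexp, hA2, h2, hAB, h3, hSc0]
end
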